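/- arXiv:1704.04033 — 3 statements merged into one kernel-verified Lean document; each statement's English description precedes it below -/
import Mathlib

section
/- If a and b are real numbers with 0 ≤ a ≤ 1 and 0 ≤ b ≤ 1 such that √a + 2b ≥ 2, then max(a, b) ≥ (9 − √17)/8. -/
theorem stmt0 (a b : ℝ) (ha0 : 0 ≤ a) (ha1 : a ≤ 1) (hb0 : 0 ≤ b) (hb1 : b ≤ 1)
    (h : Real.sqrt a + 2 * b ≥ 2) :
    max a b ≥ (9 - Real.sqrt 17) / 8 := by
  set s := Real.sqrt 17 with hs
  have hs2 : s ^ 2 = 17 := Real.sq_sqrt (by norm_num)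
  have hs0 : 0 ≤ s := Real.sqrt_nonneg _
  have hs1 : 1 ≤ s := by nlinarith
  by_contra hc
  push_neg at hc
  have ha : a < (9 - s) / 8 := lt_of_le_of_lt (le_max_left a b) hc
  have hb : b < (9 - s) / 8 := lt_of_le_of_lt (le_max_right a b) hc
  have hsq : Real.sqrt ((9 - s) / 8) = (s - 1) / 4 := by
    rw [show (9 - s) / 8 = ((s - 1) / 4) ^ 2 by nlinarith]
    exact Real.sqrt_sq (by linarith)
  have hlt : Real.sqrt a < (s - 1) / 4 := by
    rw [← hsq]
    exact Real.sqrt_lt_sqrt ha0 ha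
  linarith
end

section
/- For density operators ρ and ξ on a finite-dimensional complex inner product space, 1 − (1/2)‖ρ − ξ‖₁ ≤ F(ρ, ξ) ≤ √(1 − (1/4)‖ρ − ξ‖₁²), where F(ρ, ξ) = ‖√ρ √ξ‖₁ is the fidelity and ‖·‖₁ is the trace norm. -/
open Matrix
open scoped Matrix.Norms.L2Operator Kronecker ComplexOrder

open scoped Classical in
noncomputable def psqrt {n : ℕ} (A : Matrix (Fin n) (Fin n) ℂ) : Matrix (Fin n) (Fin n) ℂ :=
  if h : A.PosSemidef then
    (h.1.eigenvectorUnitary : Matrix (Fin n) (Fin n) ℂ) *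
      diagonal ((↑) ∘ (√·) ∘ h.1.eigenvalues) *
      (star h.1.eigenvectorUnitary : Matrix (Fin n) (Fin n) ℂ)
  else 0

noncomputable def traceNorm {n : ℕ} (X : Matrix (Fin n) (Fin n) ℂ) : ℝ :=
  ((psqrt (Xᴴ * X)).trace).re

noncomputable def fid {n : ℕ} (P Q : Matrix (Fin n) (Fin n) ℂ) : ℝ :=
  traceNorm (psqrt P * psqrt Q)

/-!
Lower bound: `F(ρ, ξ) ≥ Re tr (√ρ √ξ) = 1 - ½ ‖√ρ - √ξ‖₂²`, and the Powers–Størmer inequality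
`‖√ρ - √ξ‖₂² ≤ ‖ρ - ξ‖₁` comes from `2 (ρ - ξ) = R K + K R` with `R = √ρ - √ξ`, `K = √ρ + √ξ`,
paired with the sign of `R`.

Upper bound: with `W` the partial isometry of the polar decomposition of `√ρ √ξ`,
`F = Re tr (W* √ρ √ξ)`. Inserting `P + (1 - P)`, where `P` projects onto the nonnegative
eigenspace of `ρ - ξ`, and applying Cauchy–Schwarz to both terms gives
`F ≤ √(p q) + √((1 - p) (1 - q))` with `p = tr ρ P`, `q = tr ξ P` and `p - q = ½ ‖ρ - ξ‖₁`;
the elementary bound `√(p q) + √((1 - p) (1 - q)) ≤ √(1 - (p - q)²)` finishes.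
-/

open scoped MatrixOrder

namespace Matrix

variable {ι 𝕜 : Type*} [Fintype ι] [RCLike 𝕜]

lemma norm_trace_conjTranspose_mul_le (B C : Matrix ι ι 𝕜) :
    ‖(Bᴴ * C).trace‖ ≤ √(RCLike.re (Bᴴ * B).trace) * √(RCLike.re (Cᴴ * C).trace) := by
  let v : Matrix ι ι 𝕜 → EuclideanSpace 𝕜 (ι × ι) := fun B ↦ WithLp.toLp 2 B.vec
  have hv : ∀ B C, (Bᴴ * C).trace = inner 𝕜 (v B) (v C) := fun B C ↦ by
    rw [EuclideanSpace.inner_toLp_toLp, dotProduct_comm, star_vec_dotProduct_vec]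
  have hnorm : ∀ B, ‖v B‖ = √(RCLike.re (Bᴴ * B).trace) := fun B ↦ by
    rw [hv, ← norm_sq_eq_re_inner (𝕜 := 𝕜), Real.sqrt_sq (norm_nonneg _)]
  rw [hv, ← hnorm, ← hnorm]
  exact norm_inner_le_norm _ _

variable [DecidableEq ι]

/-- With this, `fun_prop` discharges the continuity side goals of the `cfc` API, but only for a
variable `f`: for a lambda it decomposes the function first, so the lemma is then passed by hand. -/
@[fun_prop]
lemma continuousOn_spectrum_real (f : ℝ → ℝ) (A : Matrix ι ι 𝕜) :
    ContinuousOn f (spectrum ℝ A) :=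
  finite_real_spectrum.continuousOn f

lemma IsHermitian.trace_cfc {A : Matrix ι ι 𝕜} (hA : A.IsHermitian) (f : ℝ → ℝ) :
    (cfc f A).trace = ∑ i, (f (hA.eigenvalues i) : 𝕜) := by
  rw [hA.cfc_eq, IsHermitian.cfc, Unitary.conjStarAlgAut_apply, trace_mul_cycle,
    Unitary.coe_star_mul_self, one_mul, trace_diagonal]
  rfl

lemma IsHermitian.cfc_mul_id {A : Matrix ι ι 𝕜} (hA : A.IsHermitian) (f : ℝ → ℝ) :
    cfc (fun x ↦ f x * x) A = cfc f A * A := by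
  rw [cfc_mul f (fun x ↦ x) A, cfc_id' ℝ A hA.isSelfAdjoint]

lemma IsHermitian.cfc_id_mul {A : Matrix ι ι 𝕜} (hA : A.IsHermitian) (f : ℝ → ℝ) :
    cfc (fun x ↦ x * f x) A = A * cfc f A := by
  rw [cfc_mul (fun x ↦ x) f A, cfc_id' ℝ A hA.isSelfAdjoint]

lemma posSemidef_cfc {f : ℝ → ℝ} {A : Matrix ι ι 𝕜} (hf : ∀ x ∈ spectrum ℝ A, 0 ≤ f x) :
    (cfc f A).PosSemidef :=
  (cfc_nonneg hf).posSemidef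

lemma posSemidef_one_sub_cfc {f : ℝ → ℝ} {A : Matrix ι ι 𝕜} (hA : A.IsHermitian)
    (hf : ∀ x, f x ≤ 1) : (1 - cfc f A).PosSemidef := by
  rw [← cfc_const_one ℝ A hA.isSelfAdjoint,
    ← cfc_sub _ _ _ (continuousOn_spectrum_real _ _) (continuousOn_spectrum_real _ _)]
  exact posSemidef_cfc fun x _ ↦ sub_nonneg.mpr (hf x)

lemma posSemidef_one_add_cfc {f : ℝ → ℝ} {A : Matrix ι ι 𝕜} (hA : A.IsHermitian)
    (hf : ∀ x, -1 ≤ f x) : (1 + cfc f A).PosSemidef := by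
  rw [← cfc_const_one ℝ A hA.isSelfAdjoint,
    ← cfc_add (a := A) _ _ (continuousOn_spectrum_real _ _) (continuousOn_spectrum_real _ _)]
  exact posSemidef_cfc fun x _ ↦ neg_le_iff_add_nonneg'.mp (hf x)

lemma isHermitian_cfc (f : ℝ → ℝ) (A : Matrix ι ι 𝕜) : (cfc f A).IsHermitian :=
  cfc_predicate f A

lemma isStarProjection_cfc {f : ℝ → ℝ} (hf : ∀ x, f x * f x = f x) (A : Matrix ι ι 𝕜) :
    IsStarProjection (cfc f A) :=
  ⟨by rw [IsIdempotentElem, ← cfc_mul f f A]; simp only [hf], cfc_predicate f A⟩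

lemma PosSemidef.trace_mul_nonneg {A B : Matrix ι ι 𝕜} (hA : A.PosSemidef) (hB : B.PosSemidef) :
    0 ≤ (A * B).trace := by
  have hS := (CFC.sqrt_nonneg A).posSemidef
  calc 0 ≤ (CFC.sqrt A * B * CFC.sqrt A).trace := by
        simpa [hS.1.eq] using (hB.conjTranspose_mul_mul_same (CFC.sqrt A)).trace_nonneg
    _ = (A * B).trace := by
        rw [trace_mul_cycle, CFC.sqrt_mul_sqrt_self A hA.nonneg]

lemma PosSemidef.re_trace_mul_nonneg {A B : Matrix ι ι 𝕜} (hA : A.PosSemidef)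
    (hB : B.PosSemidef) : 0 ≤ RCLike.re (A * B).trace :=
  (RCLike.nonneg_iff.mp (hA.trace_mul_nonneg hB)).1

lemma norm_trace_conjTranspose_mul_mul_le {W : Matrix ι ι 𝕜} (hW : (1 - Wᴴ * W).PosSemidef)
    (B C : Matrix ι ι 𝕜) :
    ‖(Bᴴ * W * C).trace‖ ≤ √(RCLike.re (Bᴴ * B).trace) * √(RCLike.re (Cᴴ * C).trace) := by
  have hWC : RCLike.re ((W * C)ᴴ * (W * C)).trace ≤ RCLike.re (Cᴴ * C).trace := by
    have h := (hW.conjTranspose_mul_mul_same C).trace_nonneg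
    rw [show Cᴴ * (1 - Wᴴ * W) * C = Cᴴ * C - (W * C)ᴴ * (W * C) by
      rw [conjTranspose_mul]; noncomm_ring, trace_sub] at h
    simpa using (RCLike.nonneg_iff.mp h).1
  rw [mul_assoc]
  exact (norm_trace_conjTranspose_mul_le B (W * C)).trans <| by gcongr

/-- The projection `E` turns the trace into a Cauchy–Schwarz pairing of `C E` and `D E`. -/
lemma re_trace_mul_mul_mul_le {W C D E : Matrix ι ι 𝕜} (hW : (1 - Wᴴ * W).PosSemidef)
    (hC : C.IsHermitian) (hD : D.IsHermitian) (hE : IsStarProjection E) :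
    RCLike.re (Wᴴ * C * E * D).trace ≤
      √(RCLike.re (C * C * E).trace) * √(RCLike.re (D * D * E).trace) := by
  have hEE : E * E = E := hE.isIdempotentElem
  have hEH : Eᴴ = E := hE.isSelfAdjoint
  have hsq : ∀ {M : Matrix ι ι 𝕜}, M.IsHermitian →
      ((M * E)ᴴ * (M * E)).trace = (M * M * E).trace := fun {M} hM ↦ by
    rw [conjTranspose_mul, hEH, hM.eq, mul_assoc, trace_mul_comm, mul_assoc, mul_assoc, hEE,
      ← mul_assoc]
  have htr : (Wᴴ * C * E * D).trace = star ((C * E)ᴴ * W * (D * E)).trace := by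
    rw [← trace_conjTranspose]
    simp only [conjTranspose_mul, hEH, hC.eq, hD.eq, ← mul_assoc]
    rw [trace_mul_comm _ E]
    simp only [← mul_assoc, hEE]
    rw [mul_assoc (E * D), trace_mul_comm (E * D)]
    simp only [mul_assoc]
  calc RCLike.re (Wᴴ * C * E * D).trace
      ≤ ‖((C * E)ᴴ * W * (D * E)).trace‖ := by rw [htr, ← norm_star]; exact RCLike.re_le_norm _
    _ ≤ _ := by rw [← hsq hC, ← hsq hD]; exact norm_trace_conjTranspose_mul_mul_le hW _ _

section Polar

variable (X : Matrix ι ι 𝕜)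

/-- The partial isometry `W` of the polar decomposition `X = W √(Xᴴ X)`: `(√x)⁻¹` acts as a
pseudo-inverse because `(√0)⁻¹ = 0`. -/
noncomputable def polarFactor : Matrix ι ι 𝕜 :=
  X * cfc (fun x ↦ (√x)⁻¹) (Xᴴ * X)

lemma conjTranspose_polarFactor :
    (polarFactor X)ᴴ = cfc (fun x ↦ (√x)⁻¹) (Xᴴ * X) * Xᴴ := by
  rw [polarFactor, conjTranspose_mul, (isHermitian_cfc _ _).eq]

lemma conjTranspose_polarFactor_mul : (polarFactor X)ᴴ * X = cfc Real.sqrt (Xᴴ * X) := by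
  rw [conjTranspose_polarFactor, mul_assoc,
    ← (posSemidef_conjTranspose_mul_self X).1.cfc_mul_id]
  simp only [inv_mul_eq_div, Real.div_sqrt]

lemma posSemidef_one_sub_conjTranspose_polarFactor_mul_polarFactor :
    (1 - (polarFactor X)ᴴ * polarFactor X).PosSemidef := by
  have hc (f : ℝ → ℝ) := continuousOn_spectrum_real f (Xᴴ * X)
  have hWW : (polarFactor X)ᴴ * polarFactor X = cfc (fun x ↦ √x * (√x)⁻¹) (Xᴴ * X) := by
    conv_lhs => arg 2; rw [polarFactor]
    rw [← mul_assoc, conjTranspose_polarFactor_mul, ← cfc_mul _ _ _ (hc _) (hc _)]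
  rw [hWW]
  refine posSemidef_one_sub_cfc (posSemidef_conjTranspose_mul_self X).1 fun x ↦ ?_
  rcases eq_or_ne (√x) 0 with h | h <;> simp [h]

lemma polarFactor_mul_cfc_sqrt : polarFactor X * cfc Real.sqrt (Xᴴ * X) = X := by
  have hXX := posSemidef_conjTranspose_mul_self X
  have hc (f : ℝ → ℝ) := continuousOn_spectrum_real f (Xᴴ * X)
  suffices X * cfc (fun x ↦ 1 - (√x)⁻¹ * √x) (Xᴴ * X) = 0 by
    rw [cfc_sub _ _ _ (hc _) (hc _), cfc_const_one ℝ (Xᴴ * X) hXX.1.isSelfAdjoint, mul_sub,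
      mul_one, sub_eq_zero] at this
    rw [polarFactor, mul_assoc, ← cfc_mul _ _ _ (hc _) (hc _), ← this]
  refine conjTranspose_mul_self_eq_zero.mp ?_
  rw [conjTranspose_mul, (isHermitian_cfc _ _).eq, mul_assoc, ← mul_assoc Xᴴ,
    ← hXX.1.cfc_id_mul, ← cfc_mul _ _ _ (hc _) (hc _), ← cfc_const_zero ℝ (Xᴴ * X)]
  refine cfc_congr fun x hx ↦ ?_
  rcases (spectrum_nonneg_of_nonneg hXX.nonneg hx).eq_or_lt with h | h
  · simp [← h]
  · simp [(Real.sqrt_pos.mpr h).ne']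

lemma norm_trace_le_re_trace_cfc_sqrt :
    ‖X.trace‖ ≤ RCLike.re (cfc Real.sqrt (Xᴴ * X)).trace := by
  set S := cfc (fun x ↦ √√x) (Xᴴ * X)
  have hS : Sᴴ = S := (isHermitian_cfc _ _).eq
  have hSS : S * S = cfc Real.sqrt (Xᴴ * X) := by
    rw [← cfc_mul ..]
    simp only [Real.mul_self_sqrt (Real.sqrt_nonneg _)]
  have htr : X.trace = (Sᴴ * polarFactor X * S).trace := by
    conv_lhs => rw [← polarFactor_mul_cfc_sqrt X, ← hSS, ← mul_assoc]
    rw [trace_mul_comm, hS, ← mul_assoc]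
  have h0 : 0 ≤ RCLike.re (Sᴴ * S).trace :=
    (RCLike.nonneg_iff.mp (posSemidef_conjTranspose_mul_self S).trace_nonneg).1
  calc ‖X.trace‖ = ‖(Sᴴ * polarFactor X * S).trace‖ := by rw [htr]
    _ ≤ √(RCLike.re (Sᴴ * S).trace) * √(RCLike.re (Sᴴ * S).trace) :=
      norm_trace_conjTranspose_mul_mul_le
        (posSemidef_one_sub_conjTranspose_polarFactor_mul_polarFactor X) S S
    _ = RCLike.re (cfc Real.sqrt (Xᴴ * X)).trace := by rw [Real.mul_self_sqrt h0, hS, hSS]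

end Polar

/-- The Powers–Størmer step: `C + D = (C - D) + 2 D = 2 C - (C - D)`, and the positive and
negative parts of `C - D` pair nonnegatively with `D` and `C`. -/
lemma re_trace_sub_mul_sub_le {C D : Matrix ι ι 𝕜} (hC : C.PosSemidef) (hD : D.PosSemidef) :
    RCLike.re ((C - D) * (C - D)).trace ≤
      RCLike.re (cfc (|·| : ℝ → ℝ) (C - D) * (C + D)).trace := by
  have hR : (C - D).IsHermitian := hC.1.sub hD.1
  set P := cfc (posPart : ℝ → ℝ) (C - D)
  set N := cfc (negPart : ℝ → ℝ) (C - D)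
  have habs : cfc (|·| : ℝ → ℝ) (C - D) = P + N := by
    rw [← cfc_add ..]
    simp only [posPart_add_negPart]
  have hsplit : C - D = P - N := by
    rw [← cfc_sub ..]
    simpa only [posPart_sub_negPart] using (cfc_id' ℝ (C - D) hR.isSelfAdjoint).symm
  have hPD := (posSemidef_cfc (A := C - D) fun x _ ↦ posPart_nonneg x).re_trace_mul_nonneg hD
  have hNC := (posSemidef_cfc (A := C - D) fun x _ ↦ negPart_nonneg x).re_trace_mul_nonneg hC
  have key : (P + N) * (C + D) = (P - N) * (C - D) + (P * D + P * D + N * C + N * C) := by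
    noncomm_ring
  rw [habs, key, ← hsplit]
  simp only [trace_add, map_add]
  linarith

end Matrix

lemma sqrt_mul_sqrt_add_sqrt_mul_sqrt_le {p q : ℝ} (hp₀ : 0 ≤ p) (hp₁ : p ≤ 1) (hq₀ : 0 ≤ q)
    (hq₁ : q ≤ 1) : √p * √q + √(1 - p) * √(1 - q) ≤ √(1 - (p - q) ^ 2) := by
  set a := √p
  set b := √q
  set c := √(1 - p)
  set d := √(1 - q)
  have ha : a ^ 2 = p := Real.sq_sqrt hp₀
  have hb : b ^ 2 = q := Real.sq_sqrt hq₀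
  have hc : c ^ 2 = 1 - p := Real.sq_sqrt (sub_nonneg.mpr hp₁)
  have hd : d ^ 2 = 1 - q := Real.sq_sqrt (sub_nonneg.mpr hq₁)
  have : 0 ≤ a * b + c * d := by positivity
  rw [Real.le_sqrt this (by nlinarith)]
  nlinarith [sq_nonneg (a * c - b * d), sq_nonneg (a * b - c * d)]

section TraceNorm

variable {n : ℕ}

lemma psqrt_eq_cfc {A : Matrix (Fin n) (Fin n) ℂ} (hA : A.PosSemidef) :
    psqrt A = cfc Real.sqrt A := by
  rw [psqrt, dif_pos hA, hA.1.cfc_eq, IsHermitian.cfc, Unitary.conjStarAlgAut_apply]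
  rfl

lemma psqrt_posSemidef {A : Matrix (Fin n) (Fin n) ℂ} (hA : A.PosSemidef) :
    (psqrt A).PosSemidef := by
  rw [psqrt_eq_cfc hA]
  exact posSemidef_cfc fun x _ ↦ Real.sqrt_nonneg x

lemma psqrt_mul_self {A : Matrix (Fin n) (Fin n) ℂ} (hA : A.PosSemidef) :
    psqrt A * psqrt A = A := by
  rw [psqrt_eq_cfc hA, ← cfc_mul ..]
  conv_rhs => rw [← cfc_id' ℝ A hA.1.isSelfAdjoint]
  exact cfc_congr fun x hx ↦ Real.mul_self_sqrt (spectrum_nonneg_of_nonneg hA.nonneg hx)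

lemma traceNorm_eq_re_trace_cfc_sqrt (X : Matrix (Fin n) (Fin n) ℂ) :
    traceNorm X = (cfc Real.sqrt (Xᴴ * X)).trace.re := by
  rw [traceNorm, psqrt_eq_cfc (posSemidef_conjTranspose_mul_self X)]

lemma norm_trace_le_traceNorm (X : Matrix (Fin n) (Fin n) ℂ) : ‖X.trace‖ ≤ traceNorm X := by
  rw [traceNorm_eq_re_trace_cfc_sqrt]
  exact norm_trace_le_re_trace_cfc_sqrt X

lemma Matrix.IsHermitian.traceNorm_eq {H : Matrix (Fin n) (Fin n) ℂ} (hH : H.IsHermitian) :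
    traceNorm H = ∑ i, |hH.eigenvalues i| := by
  have hsq : Hᴴ * H = cfc (· ^ 2 : ℝ → ℝ) H := by
    rw [cfc_pow_id H 2 hH.isSelfAdjoint, hH.eq, sq]
  rw [traceNorm_eq_re_trace_cfc_sqrt, hsq, ← cfc_comp' Real.sqrt _ H (ha := hH.isSelfAdjoint)]
  simp [hH.trace_cfc, Real.sqrt_sq_eq_abs]

lemma Matrix.IsHermitian.re_trace_mul_le_traceNorm {H V : Matrix (Fin n) (Fin n) ℂ}
    (hH : H.IsHermitian) (h₁ : (1 - V).PosSemidef) (h₂ : (1 + V).PosSemidef) :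
    (H * V).trace.re ≤ traceNorm H := by
  have hsplit : H = cfc (posPart : ℝ → ℝ) H - cfc (negPart : ℝ → ℝ) H := by
    rw [← cfc_sub ..]
    simpa only [posPart_sub_negPart] using (cfc_id' ℝ H hH.isSelfAdjoint).symm
  have hnorm : traceNorm H =
      (cfc (posPart : ℝ → ℝ) H).trace.re + (cfc (negPart : ℝ → ℝ) H).trace.re := by
    simp [hH.traceNorm_eq, hH.trace_cfc, ← Finset.sum_add_distrib, posPart_add_negPart]
  have hp := (posSemidef_cfc (A := H) fun x _ ↦ posPart_nonneg x).re_trace_mul_nonneg h₁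
  have hm := (posSemidef_cfc (A := H) fun x _ ↦ negPart_nonneg x).re_trace_mul_nonneg h₂
  simp only [mul_sub, mul_add, mul_one, trace_sub, trace_add, RCLike.re_to_complex,
    Complex.sub_re, Complex.add_re] at hp hm
  have hHV : (H * V).trace.re =
      (cfc (posPart : ℝ → ℝ) H * V).trace.re - (cfc (negPart : ℝ → ℝ) H * V).trace.re := by
    conv_lhs => rw [hsplit]
    rw [sub_mul, trace_sub, Complex.sub_re]
  linarith

lemma Matrix.IsHermitian.traceNorm_add_re_trace {H : Matrix (Fin n) (Fin n) ℂ}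
    (hH : H.IsHermitian) :
    traceNorm H + H.trace.re =
      2 * (H * cfc (fun x : ℝ ↦ if 0 ≤ x then 1 else 0) H).trace.re := by
  rw [← hH.cfc_id_mul]
  simp only [hH.traceNorm_eq, hH.trace_eq_sum_eigenvalues, hH.trace_cfc, Complex.re_sum,
    Finset.mul_sum, ← Finset.sum_add_distrib]
  refine Finset.sum_congr rfl fun i _ ↦ ?_
  rcases le_total 0 (hH.eigenvalues i) with h | h
  · simp [h, abs_of_nonneg h]; ring
  · rcases h.eq_or_lt with h' | h'
    · simp [h']
    · simp [h'.not_ge, abs_of_neg h']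

lemma re_trace_sub_mul_sub_le_traceNorm {C D : Matrix (Fin n) (Fin n) ℂ} (hC : C.PosSemidef)
    (hD : D.PosSemidef) : ((C - D) * (C - D)).trace.re ≤ traceNorm (C * C - D * D) := by
  have hR : (C - D).IsHermitian := hC.1.sub hD.1
  set V := cfc (fun x : ℝ ↦ (SignType.sign x : ℝ)) (C - D)
  have hVR : cfc (|·| : ℝ → ℝ) (C - D) = V * (C - D) := by
    rw [← hR.cfc_mul_id]; simp only [sign_mul_self]
  have hRV : cfc (|·| : ℝ → ℝ) (C - D) = (C - D) * V := by
    rw [← hR.cfc_id_mul]; simp only [self_mul_sign]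
  have h₁ : (1 - V).PosSemidef :=
    posSemidef_one_sub_cfc hR fun x ↦ by rcases lt_trichotomy x 0 with h | h | h <;> simp [h]
  have h₂ : (1 + V).PosSemidef :=
    posSemidef_one_add_cfc hR fun x ↦ by rcases lt_trichotomy x 0 with h | h | h <;> simp [h]
  -- `2 (C² - D²) = R K + K R` with `R = C - D`, `K = C + D`, and `V R = R V = |R|`
  have hsym : (C * C - D * D) * V + (C * C - D * D) * V =
      (C - D) * (C + D) * V + (C + D) * ((C - D) * V) := by
    noncomm_ring
  have htr := congrArg (fun M ↦ (trace M).re) hsym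
  simp only [trace_add, Complex.add_re, trace_mul_cycle (C - D), ← hVR, ← hRV,
    trace_mul_comm (C + D)] at htr
  have hPS := re_trace_sub_mul_sub_le hC hD
  have hH : (C * C - D * D).IsHermitian := by
    simp [IsHermitian, conjTranspose_mul, hC.1.eq, hD.1.eq]
  have hdual := hH.re_trace_mul_le_traceNorm h₁ h₂
  simp only [RCLike.re_to_complex] at hPS
  linarith

lemma one_sub_half_traceNorm_le_fid {ρ ξ : Matrix (Fin n) (Fin n) ℂ} (hρ : ρ.PosSemidef)
    (hξ : ξ.PosSemidef) (hρ₁ : ρ.trace = 1) (hξ₁ : ξ.trace = 1) :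
    1 - 1 / 2 * traceNorm (ρ - ξ) ≤ fid ρ ξ := by
  have hPS := re_trace_sub_mul_sub_le_traceNorm (psqrt_posSemidef hρ) (psqrt_posSemidef hξ)
  rw [psqrt_mul_self hρ, psqrt_mul_self hξ] at hPS
  have hexp : ((psqrt ρ - psqrt ξ) * (psqrt ρ - psqrt ξ)).trace.re =
      2 - 2 * (psqrt ρ * psqrt ξ).trace.re := by
    rw [show (psqrt ρ - psqrt ξ) * (psqrt ρ - psqrt ξ) = psqrt ρ * psqrt ρ + psqrt ξ * psqrt ξ -
      (psqrt ρ * psqrt ξ + psqrt ξ * psqrt ρ) by noncomm_ring, psqrt_mul_self hρ,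
      psqrt_mul_self hξ, trace_sub, trace_add, trace_add, trace_mul_comm (psqrt ξ), hρ₁, hξ₁]
    simp only [Complex.sub_re, Complex.add_re, Complex.one_re]
    ring
  have hfid : (psqrt ρ * psqrt ξ).trace.re ≤ fid ρ ξ :=
    (Complex.re_le_norm _).trans (norm_trace_le_traceNorm _)
  linarith

/-- Fidelity is at most the classical fidelity of the two-outcome measurement `{P, 1 - P}`. -/
lemma fid_le_of_isStarProjection {ρ ξ P : Matrix (Fin n) (Fin n) ℂ} (hρ : ρ.PosSemidef)
    (hξ : ξ.PosSemidef) (hP : IsStarProjection P) :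
    fid ρ ξ ≤ √(ρ * P).trace.re * √(ξ * P).trace.re +
      √(ρ * (1 - P)).trace.re * √(ξ * (1 - P)).trace.re := by
  set C := psqrt ρ
  set D := psqrt ξ
  set W := polarFactor (C * D)
  have hW := posSemidef_one_sub_conjTranspose_polarFactor_mul_polarFactor (C * D)
  have hC := (psqrt_posSemidef hρ).1
  have hD := (psqrt_posSemidef hξ).1
  have hfid : fid ρ ξ = (Wᴴ * C * P * D).trace.re + (Wᴴ * C * (1 - P) * D).trace.re := by
    rw [fid, traceNorm_eq_re_trace_cfc_sqrt, ← conjTranspose_polarFactor_mul, ← Complex.add_re,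
      ← trace_add, ← add_mul, ← mul_add, add_sub_cancel, mul_one, mul_assoc]
  have h₁ := re_trace_mul_mul_mul_le hW hC hD hP
  have h₂ := re_trace_mul_mul_mul_le hW hC hD hP.one_sub
  rw [psqrt_mul_self hρ, psqrt_mul_self hξ] at h₁ h₂
  rw [hfid]
  exact add_le_add h₁ h₂

lemma fid_le_sqrt_one_sub_traceNorm_sq {ρ ξ : Matrix (Fin n) (Fin n) ℂ} (hρ : ρ.PosSemidef)
    (hξ : ξ.PosSemidef) (hρ₁ : ρ.trace = 1) (hξ₁ : ξ.trace = 1) :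
    fid ρ ξ ≤ √(1 - 1 / 4 * traceNorm (ρ - ξ) ^ 2) := by
  have hΔ : (ρ - ξ).IsHermitian := hρ.1.sub hξ.1
  set P := cfc (fun x : ℝ ↦ if 0 ≤ x then 1 else 0) (ρ - ξ)
  have hP : IsStarProjection P := isStarProjection_cfc (fun x ↦ by split_ifs <;> simp) _
  have hcompl : ∀ {A : Matrix (Fin n) (Fin n) ℂ}, A.trace = 1 →
      (A * (1 - P)).trace.re = 1 - (A * P).trace.re := fun hA ↦ by
    rw [mul_sub, mul_one, trace_sub, hA, Complex.sub_re, Complex.one_re]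
  have hbounds : ∀ {A : Matrix (Fin n) (Fin n) ℂ}, A.PosSemidef → A.trace = 1 →
      0 ≤ (A * P).trace.re ∧ (A * P).trace.re ≤ 1 := fun hA hA₁ ↦
    ⟨hA.re_trace_mul_nonneg hP.nonneg.posSemidef,
      sub_nonneg.mp (hcompl hA₁ ▸ hA.re_trace_mul_nonneg hP.one_sub.nonneg.posSemidef)⟩
  have hnorm : traceNorm (ρ - ξ) = 2 * ((ρ * P).trace.re - (ξ * P).trace.re) := by
    have h := hΔ.traceNorm_add_re_trace
    rw [trace_sub, hρ₁, hξ₁, sub_self, Complex.zero_re, add_zero] at h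
    rw [h, sub_mul, trace_sub, Complex.sub_re]
  rw [show 1 - 1 / 4 * traceNorm (ρ - ξ) ^ 2 = 1 - ((ρ * P).trace.re - (ξ * P).trace.re) ^ 2 by
    rw [hnorm]; ring]
  refine (fid_le_of_isStarProjection hρ hξ hP).trans ?_
  rw [hcompl hρ₁, hcompl hξ₁]
  exact sqrt_mul_sqrt_add_sqrt_mul_sqrt_le (hbounds hρ hρ₁).1 (hbounds hρ hρ₁).2
    (hbounds hξ hξ₁).1 (hbounds hξ hξ₁).2

end TraceNorm

/-- Fuchs–van de Graaf inequalities for density operators. -/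
theorem stmt1 {n : ℕ} (ρ ξ : Matrix (Fin n) (Fin n) ℂ)
    (hρ : ρ.PosSemidef) (hξ : ξ.PosSemidef) (hρ1 : ρ.trace = 1) (hξ1 : ξ.trace = 1) :
    1 - (1 / 2) * traceNorm (ρ - ξ) ≤ fid ρ ξ ∧
    fid ρ ξ ≤ Real.sqrt (1 - (1 / 4) * (traceNorm (ρ - ξ)) ^ 2) :=
  ⟨one_sub_half_traceNorm_le_fid hρ hξ hρ1 hξ1, fid_le_sqrt_one_sub_traceNorm_sq hρ hξ hρ1 hξ1⟩
end

section
/- The closed unit ball of the operator norm on matrices over ℂ of size n×n is the convex hull of the unitary group U(n). -/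
/-!
An invertible contraction `x` has the polar decomposition `x = u |x|` with `u = x |x|⁻¹` unitary,
and the self-adjoint contraction `|x|` is the real part of the unitary `|x| + i √(1 - |x|²)`, so `x`
is the midpoint of two unitaries. In finite dimension the spectrum of `x` is finite, so
`(1 - s) (x - s)` is an invertible contraction for all small `s > 0`; since the set of midpoints of
unitaries is compact, every contraction is such a midpoint.
-/

open Filter Topology Polynomial

theorem spectrum.finite_of_finiteDimensional {𝕜 A : Type*} [Field 𝕜] [Ring A] [Algebra 𝕜 A]
    [FiniteDimensional 𝕜 A] (a : A) : (spectrum 𝕜 a).Finite := by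
  nontriviality A
  obtain ⟨p, hp_monic, hp⟩ := Algebra.IsIntegral.isIntegral (R := 𝕜) a
  refine (p.finite_setOfPred_isRoot hp_monic.ne_zero).subset fun k hk => ?_
  have := spectrum.subset_polynomial_aeval a p ⟨k, hk, rfl⟩
  rwa [aeval_def, hp, spectrum.zero_eq, Set.mem_singleton_iff] at this

namespace CStarAlgebra

variable {A : Type*} [CStarAlgebra A]

lemma _root_.IsSelfAdjoint.exists_mem_unitary_midpoint_star {a : A} (ha : IsSelfAdjoint a)
    (ha_norm : ‖a‖ ≤ 1) : ∃ u ∈ unitary A, midpoint ℝ u (star u) = a := by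
  -- `CFC.sqrt` needs an order on `A`: use the spectral one.
  let _ := CStarAlgebra.spectralOrder A
  let _ := CStarAlgebra.spectralOrderedRing A
  have h := congrArg Subtype.val (selfAdjoint.realPart_unitarySelfAddISMul ⟨a, ha⟩ ha_norm)
  rw [realPart_apply_coe] at h
  exact ⟨_, SetLike.coe_mem _, by rwa [midpoint_eq_smul_add, invOf_eq_inv]⟩

lemma _root_.IsUnit.exists_mem_unitary_midpoint {x : A} (hx : IsUnit x) (hx_norm : ‖x‖ ≤ 1) :
    ∃ u ∈ unitary A, ∃ v ∈ unitary A, midpoint ℝ u v = x := by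
  let _ := CStarAlgebra.spectralOrder A
  let _ := CStarAlgebra.spectralOrderedRing A
  obtain ⟨p, hp⟩ : IsUnit (CFC.abs x) :=
    ((Commute.refl _).isUnit_mul_iff.1 (CFC.abs_mul_abs x ▸ hx.star.mul hx)).1
  have hp_sq : (p : A) * p = star x * x := hp ▸ CFC.abs_mul_abs x
  have hp_sa : IsSelfAdjoint (p : A) := hp ▸ (CFC.abs_nonneg x).isSelfAdjoint
  have hp_inv : star (↑p⁻¹ : A) = ↑p⁻¹ := by
    rw [← Units.coe_star_inv, show star p = p from Units.ext hp_sa.star_eq]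
  obtain ⟨w, hw, hpw⟩ :=
    hp_sa.exists_mem_unitary_midpoint_star (hp ▸ CFC.norm_abs.trans_le hx_norm)
  set u : Aˣ := hx.unit * p⁻¹
  have hu_coe : (u : A) = x * ↑p⁻¹ := by simp [u]
  have hu_star : star (u : A) * u = 1 := calc
    star (u : A) * u = ↑p⁻¹ * (star x * x) * ↑p⁻¹ := by
      rw [hu_coe, star_mul, hp_inv]; simp only [mul_assoc]
    _ = 1 := by rw [← hp_sq]; simp
  have hu : (u : A) ∈ unitary A := by
    rw [Units.mul_eq_one_iff_eq_inv] at hu_star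
    rw [Unitary.mem_iff, hu_star]
    simp
  refine ⟨u * w, mul_mem hu hw, u * star w, mul_mem hu (Unitary.star_mem hw), ?_⟩
  calc midpoint ℝ (↑u * w) (↑u * star w) = u * midpoint ℝ w (star w) := by
        simp only [midpoint_eq_smul_add, mul_add, mul_smul_comm]
    _ = x := by rw [hpw, hu_coe]; simp

lemma norm_le_one_of_mem_unitary {u : A} (hu : u ∈ unitary A) : ‖u‖ ≤ 1 := by
  nontriviality A
  exact (CStarRing.norm_of_mem_unitary hu).le

variable [FiniteDimensional ℂ A]

lemma isCompact_unitary : IsCompact (unitary A : Set A) :=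
  Metric.isCompact_of_isClosed_isBounded isClosed_unitary <|
    (Metric.isBounded_closedBall (x := (0 : A)) (r := 1)).subset fun _ hu =>
      mem_closedBall_zero_iff.2 (norm_le_one_of_mem_unitary hu)

lemma mem_closure_setOf_isUnit_norm_le_one {x : A} (hx : ‖x‖ ≤ 1) :
    x ∈ closure {y : A | IsUnit y ∧ ‖y‖ ≤ 1} := by
  nontriviality A
  set f : ℝ → A := fun s => (1 - s) • (x - algebraMap ℝ A s)
  have hf : Tendsto f (𝓝[>] 0) (𝓝 x) := by
    have hf_cont : Continuous f := by fun_prop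
    exact (hf_cont.tendsto' 0 x (by simp [f])).mono_left nhdsWithin_le_nhds
  have hfin : (spectrum ℝ x).Finite := by
    rw [← spectrum.preimage_algebraMap ℂ]
    exact (spectrum.finite_of_finiteDimensional x).preimage (algebraMap ℝ ℂ).injective.injOn
  have hs_spec : ∀ᶠ s in 𝓝[>] (0 : ℝ), s ∉ spectrum ℝ x :=
    nhdsWithin_mono _ (fun s hs => ne_of_gt hs) (nhdsNE_le_cofinite 0 hfin.compl_mem_cofinite)
  refine mem_closure_of_tendsto hf ?_
  filter_upwards [hs_spec, Ioo_mem_nhdsGT one_pos] with s hs ⟨hs0, hs1⟩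
  have hunit : IsUnit (x - algebraMap ℝ A s) := by
    simpa using (spectrum.notMem_iff.1 hs).neg
  refine ⟨?_, ?_⟩
  · rw [show f s = algebraMap ℝ A (1 - s) * (x - algebraMap ℝ A s) from Algebra.smul_def _ _]
    exact ((isUnit_iff_ne_zero.2 (sub_pos.2 hs1).ne').map _).mul hunit
  · calc ‖f s‖ ≤ (1 - s) * (‖x‖ + ‖algebraMap ℝ A s‖) := by
          rw [norm_smul, Real.norm_of_nonneg (sub_pos.2 hs1).le]
          gcongr
          exact norm_sub_le _ _
      _ ≤ (1 - s) * (1 + s) := by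
          rw [norm_algebraMap', Real.norm_of_nonneg hs0.le]
          gcongr
      _ ≤ 1 := by nlinarith

theorem exists_mem_unitary_midpoint_of_norm_le_one {x : A} (hx : ‖x‖ ≤ 1) :
    ∃ u ∈ unitary A, ∃ v ∈ unitary A, midpoint ℝ u v = x := by
  set M := (fun p : A × A => midpoint ℝ p.1 p.2) '' (unitary A ×ˢ unitary A)
  have hM : IsClosed M := by
    refine ((isCompact_unitary.prod isCompact_unitary).image ?_).isClosed
    simp only [midpoint_eq_smul_add]
    fun_prop
  have hunits : {y : A | IsUnit y ∧ ‖y‖ ≤ 1} ⊆ M := fun y ⟨hy, hy_norm⟩ => by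
    obtain ⟨u, hu, v, hv, h⟩ := hy.exists_mem_unitary_midpoint hy_norm
    exact ⟨(u, v), ⟨hu, hv⟩, h⟩
  obtain ⟨⟨u, v⟩, ⟨hu, hv⟩, h⟩ :=
    closure_minimal hunits hM (mem_closure_setOf_isUnit_norm_le_one hx)
  exact ⟨u, hu, v, hv, h⟩

theorem closedBall_zero_one_eq_convexHull_unitary :
    Metric.closedBall (0 : A) 1 = convexHull ℝ (unitary A : Set A) := by
  refine subset_antisymm (fun x hx => ?_)
    (convexHull_min (fun u hu => ?_) (convex_closedBall 0 1))
  · obtain ⟨u, hu, v, hv, rfl⟩ :=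
      exists_mem_unitary_midpoint_of_norm_le_one (mem_closedBall_zero_iff.1 hx)
    exact (convex_convexHull ℝ _).midpoint_mem
      (subset_convexHull ℝ _ hu) (subset_convexHull ℝ _ hv)
  · exact mem_closedBall_zero_iff.2 (norm_le_one_of_mem_unitary hu)

end CStarAlgebra

open scoped Matrix.Norms.L2Operator

/-- Finite-dimensional Russo–Dye: the operator-norm unit ball is the convex hull
of the unitary group. -/
theorem stmt5 {n : ℕ} :
    {K : Matrix (Fin n) (Fin n) ℂ | ‖K‖ ≤ 1} =
      convexHull ℝ (Matrix.unitaryGroup (Fin n) ℂ : Set (Matrix (Fin n) (Fin n) ℂ)) := by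
  rw [← CStarAlgebra.closedBall_zero_one_eq_convexHull_unitary]
  ext K
  simp
end
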